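/- arXiv:2412.07980 — 2 statements merged into one kernel-verified Lean document; each statement's English description precedes it below -/
import Mathlib

section
/- Let ℓ, K be positive natural numbers, W : Fin K → ℝ^ℓ and b : Fin K → ℝ. For each k, define the power cell with sites μ_k = W_k/2 and weights w_k = b_k + ‖W_k‖²/4 as ω_k = {z ∈ ℝ^ℓ : ∀ j, ‖z − μ_k‖² − w_k ≤ ‖z − μ_j‖² − w_j}. Then for every k, the decision region of the linear classifier {z ∈ ℝ^ℓ : ∀ j, ⟪W_j, z⟫ + b_j ≤ ⟪W_k, z⟫ + b_k} equals ω_k. -/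
open scoped RealInnerProductSpace

/-! Expanding the square, the power distance from `z` to the site `W k / 2` with weight
`b k + ‖W k‖² / 4` is `‖z‖² - (⟪W k, z⟫ + b k)`; the term `‖z‖²` is the same for every site,
so comparing power distances is comparing the affine scores of the classifier. -/

theorem norm_sub_half_smul_sq_sub_eq {E : Type*} [NormedAddCommGroup E] [InnerProductSpace ℝ E]
    (w z : E) (c : ℝ) :
    ‖z - (2⁻¹ : ℝ) • w‖ ^ 2 - (c + ‖w‖ ^ 2 / 4) = ‖z‖ ^ 2 - (⟪w, z⟫ + c) := by
  rw [norm_sub_sq_real, real_inner_smul_right, norm_smul, norm_inv, Real.norm_two, real_inner_comm]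
  ring

theorem linear_decision_region_eq_power_cell_general (ℓ K : ℕ)
    (W : Fin K → EuclideanSpace ℝ (Fin ℓ)) (b : Fin K → ℝ) (k : Fin K) :
    {z : EuclideanSpace ℝ (Fin ℓ) | ∀ j, ⟪W j, z⟫ + b j ≤ ⟪W k, z⟫ + b k} =
      {z : EuclideanSpace ℝ (Fin ℓ) | ∀ j,
        ‖z - (2⁻¹ : ℝ) • W k‖ ^ 2 - (b k + ‖W k‖ ^ 2 / 4) ≤
          ‖z - (2⁻¹ : ℝ) • W j‖ ^ 2 - (b j + ‖W j‖ ^ 2 / 4)} := by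
  ext z
  simp only [Set.mem_ofPred_eq, norm_sub_half_smul_sq_sub_eq, sub_le_sub_iff_left]

/-- A linear (logistic regression) classifier partitions feature space into a
Power Diagram with sites `μ k = W k / 2` and weights `w k = b k + ‖W k‖²/4`. -/
theorem linear_decision_region_eq_power_cell (ℓ K : ℕ) (hℓ : 0 < ℓ) (hK : 0 < K)
    (W : Fin K → EuclideanSpace ℝ (Fin ℓ)) (b : Fin K → ℝ) (k : Fin K) :
    {z : EuclideanSpace ℝ (Fin ℓ) | ∀ j, ⟪W j, z⟫ + b j ≤ ⟪W k, z⟫ + b k} =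
      {z : EuclideanSpace ℝ (Fin ℓ) | ∀ j,
        ‖z - (2⁻¹ : ℝ) • W k‖ ^ 2 - (b k + ‖W k‖ ^ 2 / 4) ≤
          ‖z - (2⁻¹ : ℝ) • W j‖ ^ 2 - (b j + ‖W j‖ ^ 2 / 4)} :=
  linear_decision_region_eq_power_cell_general ℓ K W b k
end

section
/- Let (X, d) be a metric space, K a positive natural number with K ≥ 2, γ < 0 a real number, and C : Fin K → Finset X a family of finite clusters. Fix k and μ ∈ C_k, and assume μ ∉ C_j for every j ≠ k. Then there exists a punctured neighborhood U of μ (a set in the punctured neighborhood filter 𝓝[≠] μ) such that for every z ∈ U and every j ≠ k, Σ_{p ∈ C_j} (d(z, p))^γ < Σ_{p ∈ C_k} (d(z, p))^γ; that is, near μ the CIVD influence of cluster k strictly dominates that of every other cluster, so a punctured neighborhood of μ lies in the CIVD cell of cluster k. -/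
open scoped Topology

open Filter Real

lemma rpow_tendsto_atTop_zero {γ : ℝ} (hγ : γ < 0) :
    Tendsto (fun t : ℝ => t ^ γ) (𝓝[>] (0:ℝ)) atTop := by
  have h1 : Tendsto (fun t : ℝ => t⁻¹) (𝓝[>] (0:ℝ)) atTop :=
    tendsto_inv_nhdsGT_zero
  have h2 : Tendsto (fun x : ℝ => x ^ (-γ)) atTop atTop :=
    tendsto_rpow_atTop (by linarith)
  have := h2.comp h1
  refine this.congr' ?_
  filter_upwards [self_mem_nhdsWithin] with t (ht : 0 < t)
  simp [Function.comp, Real.inv_rpow ht.le, ← Real.rpow_neg ht.le]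

/-- Near a site `μ` of cluster `k` that belongs to no other cluster, the CIVD influence
of cluster `k` strictly dominates that of every other cluster on some punctured
neighborhood of `μ`. -/
theorem civd_influence_dominates_near_site {X : Type*} [MetricSpace X]
    (K : ℕ) (hK : 2 ≤ K) (γ : ℝ) (hγ : γ < 0) (C : Fin K → Finset X) (k : Fin K)
    (μ : X) (hμ : μ ∈ C k) (hμ' : ∀ j, j ≠ k → μ ∉ C j) :
    ∃ U ∈ 𝓝[≠] μ, ∀ z ∈ U, ∀ j, j ≠ k →
      ∑ p ∈ C j, (dist z p) ^ γ < ∑ p ∈ C k, (dist z p) ^ γ := by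
  -- the sum for cluster k blows up at μ
  have hdist : Tendsto (fun z : X => dist z μ) (𝓝[≠] μ) (𝓝[>] (0:ℝ)) := by
    rw [tendsto_nhdsWithin_iff]
    constructor
    · have : Tendsto (fun z : X => dist z μ) (𝓝 μ) (𝓝 0) := by
        simpa using ((continuous_id.dist (continuous_const : Continuous fun _ : X => μ)).tendsto μ)
      exact this.mono_left nhdsWithin_le_nhds
    · filter_upwards [self_mem_nhdsWithin] with z hz
      exact dist_pos.2 hz
  have hk_top : Tendsto (fun z : X => ∑ p ∈ C k, (dist z p) ^ γ) (𝓝[≠] μ) atTop := by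
    refine tendsto_atTop_mono (fun z => ?_) ((rpow_tendsto_atTop_zero hγ).comp hdist)
    exact Finset.single_le_sum (f := fun p => (dist z p) ^ γ)
      (fun p _ => Real.rpow_nonneg dist_nonneg γ) hμ
  have hmain : ∀ j : Fin K, ∀ᶠ z in 𝓝[≠] μ, j ≠ k →
      ∑ p ∈ C j, (dist z p) ^ γ < ∑ p ∈ C k, (dist z p) ^ γ := by
    intro j
    by_cases hjk : j = k
    · filter_upwards with z h; exact absurd hjk h
    · -- sum for cluster j is continuous at μ
      set L : ℝ := ∑ p ∈ C j, (dist μ p) ^ γ with hL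
      have hcont : Tendsto (fun z : X => ∑ p ∈ C j, (dist z p) ^ γ) (𝓝 μ) (𝓝 L) := by
        refine tendsto_finset_sum _ (fun p hp => ?_)
        have hd : dist μ p ≠ 0 := dist_ne_zero.2 (by
          rintro rfl; exact hμ' j hjk hp)
        exact (((continuous_id.dist (continuous_const : Continuous fun _ : X => p)).continuousAt).rpow_const
          (Or.inl hd)).tendsto
      have h1 : ∀ᶠ z in 𝓝[≠] μ, ∑ p ∈ C j, (dist z p) ^ γ < L + 1 :=
        (hcont.mono_left nhdsWithin_le_nhds).eventually_lt_const (by linarith)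
      have h2 : ∀ᶠ z in 𝓝[≠] μ, L + 1 < ∑ p ∈ C k, (dist z p) ^ γ :=
        hk_top.eventually_gt_atTop _
      filter_upwards [h1, h2] with z hz1 hz2 _
      linarith
  have H : ∀ᶠ z in 𝓝[≠] μ, ∀ j, j ≠ k →
      ∑ p ∈ C j, (dist z p) ^ γ < ∑ p ∈ C k, (dist z p) ^ γ :=
    eventually_all.2 hmain
  exact ⟨_, H, fun z hz => hz⟩
end
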